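/- Let g = A_{5,5} be the 5-dimensional metric Lie algebra with orthonormal basis v1,…,v5 and nonzero brackets [v1,v2] = α v4 + β v5, [v1,v3] = γ v5, [v2,v3] = δ v5, [v2,v4] = ε v5, with α, γ, ε > 0 and β, δ ∈ ℝ. Then ξ = Σ ξ_i v_i is affine if and only if ξ1 = ξ2 = ξ3 = ξ4 = 0, i.e. ξ ∈ Z(g) = span{v5}. -/

import Mathlib

local notation "⟪" x ", " y "⟫" => @inner ℝ _ _ x y

/-- The underlying space `ℝ⁵`. -/
abbrev V := EuclideanSpace ℝ (Fin 5)

/-- The standard orthonormal basis; `e 0,…,e 4` play the roles of `v1,…,v5`. -/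
noncomputable def e (i : Fin 5) : V := EuclideanSpace.single i 1

/-! A central `ξ` is affine because `∇ x y` vanishes as soon as `x` or `y` does. Conversely
(numbering as in `v1,…,v5`), the `v2`-component of the affine condition at `(v4, v4)`, the
`v4`-components at `(v4, v5)` and `(v1, v2)` and the `v5`-component at `(v1, v4)` form the triangular
system `ε²ξ2 = αεξ1 = ε(βξ2 + γξ3) = α(εξ4 + δξ3 - βξ1) = 0`. -/

section LeviCivita

variable {E : Type*} [NormedAddCommGroup E] [InnerProductSpace ℝ E]

def IsKoszul (b : E →ₗ[ℝ] E →ₗ[ℝ] E) (nab : E → E → E) : Prop :=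
  ∀ x y z, 2 * ⟪nab x y, z⟫ = ⟪b x y, z⟫ - ⟪b y z, x⟫ + ⟪b z x, y⟫

def IsAffine (b : E →ₗ[ℝ] E →ₗ[ℝ] E) (nab : E → E → E) (ξ : E) : Prop :=
  ∀ v w, b ξ (nab v w) - nab (b ξ v) w - nab v (b ξ w) = 0

variable {b : E →ₗ[ℝ] E →ₗ[ℝ] E} {nab : E → E → E}

theorem IsKoszul.inner_eq (h : IsKoszul b nab) (x y z : E) :
    ⟪nab x y, z⟫ = (⟪b x y, z⟫ - ⟪b y z, x⟫ + ⟪b z x, y⟫) / 2 := by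
  linarith [h x y z]

theorem IsKoszul.zero_left (h : IsKoszul b nab) (y : E) : nab 0 y = 0 :=
  ext_inner_right ℝ fun z => by simp [h.inner_eq]

theorem IsKoszul.zero_right (h : IsKoszul b nab) (x : E) : nab x 0 = 0 :=
  ext_inner_right ℝ fun z => by simp [h.inner_eq]

theorem IsKoszul.isAffine_of_bracket_eq_zero (h : IsKoszul b nab) {ξ : E}
    (hξ : ∀ x, b ξ x = 0) : IsAffine b nab ξ := fun v w => by
  simp [hξ, h.zero_left, h.zero_right]

end LeviCivita

theorem e_apply (i k : Fin 5) : e i k = if k = i then 1 else 0 := by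
  simp [e]

theorem inner_e_left (x : V) (k : Fin 5) : ⟪e k, x⟫ = x k := by
  simp [e, EuclideanSpace.inner_single_left]

theorem eq_sum_coord_smul_e (x : V) :
    x = x 0 • e 0 + x 1 • e 1 + x 2 • e 2 + x 3 • e 3 + x 4 • e 4 := by
  ext k
  fin_cases k <;> simp [e_apply]

theorem IsKoszul.apply_eq {b : V →ₗ[ℝ] V →ₗ[ℝ] V} {nab : V → V → V} (hk : IsKoszul b nab)
    (x y : V) (k : Fin 5) :
    nab x y k = (⟪b x y, e k⟫ - ⟪b y (e k), x⟫ + ⟪b (e k) x, y⟫) / 2 := by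
  rw [← hk.inner_eq, real_inner_comm, inner_e_left]

structure IsA55Bracket (α β γ δ ε : ℝ) (b : V →ₗ[ℝ] V →ₗ[ℝ] V) : Prop where
  skew : ∀ x y, b x y = - b y x
  bracket_e0_e1 : b (e 0) (e 1) = α • e 3 + β • e 4
  bracket_e0_e2 : b (e 0) (e 2) = γ • e 4
  bracket_e1_e2 : b (e 1) (e 2) = δ • e 4
  bracket_e1_e3 : b (e 1) (e 3) = ε • e 4
  bracket_eq_zero : ∀ i j : Fin 5, i < j →
    (i, j) ∉ ({(0, 1), (0, 2), (1, 2), (1, 3)} : Set (Fin 5 × Fin 5)) → b (e i) (e j) = 0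

namespace IsA55Bracket

variable {α β γ δ ε : ℝ} {b : V →ₗ[ℝ] V →ₗ[ℝ] V}

theorem self_eq_zero (hb : IsA55Bracket α β γ δ ε b) (x : V) : b x x = 0 := by
  have h : (2 : ℝ) • b x x = 0 := by
    rw [two_smul]; nth_rw 2 [hb.skew x x]; exact add_neg_cancel _
  exact (smul_eq_zero.mp h).resolve_left two_ne_zero

theorem bracket_eq (hb : IsA55Bracket α β γ δ ε b) (x y : V) :
    b x y = (α * (x 0 * y 1 - x 1 * y 0)) • e 3 +
      (β * (x 0 * y 1 - x 1 * y 0) + γ * (x 0 * y 2 - x 2 * y 0) + δ * (x 1 * y 2 - x 2 * y 1)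
        + ε * (x 1 * y 3 - x 3 * y 1)) • e 4 := by
  have hz (i j : Fin 5) (hij : i < j := by decide) (hn : (i, j) ∉
      ({(0, 1), (0, 2), (1, 2), (1, 3)} : Set (Fin 5 × Fin 5)) := by simp [Prod.ext_iff]) :
      b (e i) (e j) = 0 := hb.bracket_eq_zero i j hij hn
  have hs (i j : Fin 5) : b (e j) (e i) = - b (e i) (e j) := hb.skew _ _
  conv_lhs => rw [eq_sum_coord_smul_e x, eq_sum_coord_smul_e y]
  simp only [map_add, map_smul, LinearMap.add_apply, LinearMap.smul_apply, hb.self_eq_zero,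
    hs 0 1, hs 0 2, hs 0 3, hs 0 4, hs 1 2, hs 1 3, hs 1 4, hs 2 3, hs 2 4, hs 3 4,
    hb.bracket_e0_e1, hb.bracket_e0_e2, hb.bracket_e1_e2, hb.bracket_e1_e3,
    hz 0 3, hz 0 4, hz 1 4, hz 2 3, hz 2 4, hz 3 4]
  module

theorem inner_bracket_eq (hb : IsA55Bracket α β γ δ ε b) (x y z : V) :
    ⟪b x y, z⟫ = (α * (x 0 * y 1 - x 1 * y 0)) * z 3 +
      (β * (x 0 * y 1 - x 1 * y 0) + γ * (x 0 * y 2 - x 2 * y 0) + δ * (x 1 * y 2 - x 2 * y 1)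
        + ε * (x 1 * y 3 - x 3 * y 1)) * z 4 := by
  simp only [hb.bracket_eq, inner_add_left, real_inner_smul_left, inner_e_left]

theorem bracket_apply (hb : IsA55Bracket α β γ δ ε b) (x y : V) (k : Fin 5) :
    b x y k = (α * (x 0 * y 1 - x 1 * y 0)) * e k 3 +
      (β * (x 0 * y 1 - x 1 * y 0) + γ * (x 0 * y 2 - x 2 * y 0) + δ * (x 1 * y 2 - x 2 * y 1)
        + ε * (x 1 * y 3 - x 3 * y 1)) * e k 4 := by
  rw [← inner_e_left, real_inner_comm, hb.inner_bracket_eq]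

variable {nab : V → V → V}

theorem affine_equations (hb : IsA55Bracket α β γ δ ε b) (hk : IsKoszul b nab) {ξ : V}
    (h : IsAffine b nab ξ) :
    ε ^ 2 * ξ 1 = 0 ∧ α * ε * ξ 0 = 0 ∧ ε * (β * ξ 1 + γ * ξ 2) = 0 ∧
      α * (ε * ξ 3 + δ * ξ 2 - β * ξ 0) = 0 := by
  have defect (v w : V) (k : Fin 5) :
      b ξ (nab v w) k - nab (b ξ v) w k - nab v (b ξ w) k = 0 := by
    simpa using congrArg (· k) (h v w)
  have E1 := defect (e 3) (e 3) 1
  have E2 := defect (e 3) (e 4) 3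
  have E3 := defect (e 0) (e 1) 3
  have E4 := defect (e 0) (e 3) 4
  simp only [hb.bracket_apply, hk.apply_eq, hb.inner_bracket_eq, e_apply, Fin.reduceEq,
    reduceIte, Fin.isValue] at E1 E2 E3 E4
  refine ⟨?_, ?_, ?_, ?_⟩
  · linear_combination -E1
  · linear_combination 2 * E2
  · linear_combination -2 * E3
  · linear_combination 2 * E4

theorem coord_eq_zero_of_isAffine (hα : 0 < α) (hγ : 0 < γ) (hε : 0 < ε)
    (hb : IsA55Bracket α β γ δ ε b) (hk : IsKoszul b nab) {ξ : V} (h : IsAffine b nab ξ) :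
    ξ 0 = 0 ∧ ξ 1 = 0 ∧ ξ 2 = 0 ∧ ξ 3 = 0 := by
  obtain ⟨E1, E2, E3, E4⟩ := hb.affine_equations hk h
  have h1 : ξ 1 = 0 := by simpa [hε.ne'] using E1
  have h0 : ξ 0 = 0 := by simpa [hα.ne', hε.ne'] using E2
  have h2 : ξ 2 = 0 := by simpa [h1, hγ.ne', hε.ne'] using E3
  have h3 : ξ 3 = 0 := by simpa [h0, h2, hα.ne', hε.ne'] using E4
  exact ⟨h0, h1, h2, h3⟩

end IsA55Bracket

/-- on `A_{5,5}` (brackets `[v1,v2]=αv4+βv5`, `[v1,v3]=γv5`,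
`[v2,v3]=δv5`, `[v2,v4]=εv5`, `α,γ,ε>0`), `ξ` is affine iff `ξ1=ξ2=ξ3=ξ4=0`,
i.e. `ξ ∈ Z(g) = span{v5}`. -/
theorem stmt_15
    (α β γ δ ε : ℝ) (hα : 0 < α) (hγ : 0 < γ) (hε : 0 < ε)
    (b : V →ₗ[ℝ] V →ₗ[ℝ] V)
    (hskew : ∀ x y, b x y = - b y x)
    (h12 : b (e 0) (e 1) = α • e 3 + β • e 4)
    (h13 : b (e 0) (e 2) = γ • e 4)
    (h23 : b (e 1) (e 2) = δ • e 4)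
    (h24 : b (e 1) (e 3) = ε • e 4)
    (hzero : ∀ i j : Fin 5, i < j →
      (i, j) ∉ ({(0, 1), (0, 2), (1, 2), (1, 3)} : Set (Fin 5 × Fin 5)) → b (e i) (e j) = 0)
    (nab : V → V → V)
    (hkoszul : ∀ x y z, 2 * ⟪nab x y, z⟫ = ⟪b x y, z⟫ - ⟪b y z, x⟫ + ⟪b z x, y⟫)
    (ξ : V) :
    (∀ v w, b ξ (nab v w) - nab (b ξ v) w - nab v (b ξ w) = 0) ↔
      (ξ 0 = 0 ∧ ξ 1 = 0 ∧ ξ 2 = 0 ∧ ξ 3 = 0) := by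
  have hb : IsA55Bracket α β γ δ ε b := ⟨hskew, h12, h13, h23, h24, hzero⟩
  have hk : IsKoszul b nab := hkoszul
  refine ⟨hb.coord_eq_zero_of_isAffine hα hγ hε hk, ?_⟩
  rintro ⟨h0, h1, h2, h3⟩
  exact hk.isAffine_of_bracket_eq_zero fun x => by simp [hb.bracket_eq, h0, h1, h2, h3]
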